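/- If (T,p) is a prime parking function on a rooted tree T with n ≥ 1 vertices, then the n-th (final) driver parks at the root of T. -/

import Mathlib

/-! Rooted trees on vertex set `Fin n`, edges oriented towards the root: encoded by
the root and the parent function (`parent v` is the endpoint of the unique outgoing
edge of a non-root vertex `v`; the root is a fixed point). Tree-ness is the condition
that every vertex reaches the root by iterating `parent` (fewer than `n` steps
always suffice). -/

/-- `(root, parent)` encodes a rooted tree on `Fin n` with edges oriented toward the
root. -/
def IsRootedTree {n : ℕ} (root : Fin n) (parent : Fin n → Fin n) : Prop :=
  parent root = root ∧ ∀ v, ∃ k ∈ Finset.range n, parent^[k] v = root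

/-- `T_v`: the set of vertices `u` with a directed path from `u` to `v`
(including `v` itself). -/
def subtree {n : ℕ} (parent : Fin n → Fin n) (v : Fin n) : Finset (Fin n) :=
  Finset.univ.filter fun u => ∃ k ∈ Finset.range n, parent^[k] u = v

/-- The directed path from `v` towards the root: `v, parent v, parent² v, …`. -/
def pathToRoot {n : ℕ} (parent : Fin n → Fin n) (v : Fin n) : List (Fin n) :=
  (List.range n).map fun k => parent^[k] v

/-- The spot where a driver preferring `v` parks, given the set `occ` of occupied
vertices: the first unoccupied vertex on the path from `v` to the root (`none` if
there is no such vertex, i.e. the driver leaves without parking). -/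
def parkSpot {n : ℕ} (parent : Fin n → Fin n) (occ : Finset (Fin n)) (v : Fin n) :
    Option (Fin n) :=
  (pathToRoot parent v).find? fun u => decide (u ∉ occ)

/-- The effect of one driver (preferring `v`) parking on the occupied set. -/
def treeStep {n : ℕ} (parent : Fin n → Fin n) (occ : Finset (Fin n)) (v : Fin n) :
    Finset (Fin n) :=
  match parkSpot parent occ v with
  | some u => insert u occ
  | none => occ

/-- The set of occupied vertices after the first `m` drivers (with preference
sequence `s`) have attempted to park, in order. -/
def occAfter {n : ℕ} (parent : Fin n → Fin n) (s : Fin n → Fin n) (m : ℕ) :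
    Finset (Fin n) :=
  ((List.ofFn s).take m).foldl (treeStep parent) ∅

/-- `s` is a parking function on the rooted tree `(root, parent)`: all `n` drivers
successfully park. -/
def IsTreePF {n : ℕ} (parent : Fin n → Fin n) (s : Fin n → Fin n) : Prop :=
  occAfter parent s n = Finset.univ

/-- `s` is a prime parking function on `(root, parent)`: it is a parking function and
for every non-root vertex `v`, `|T_v| < |{i : s_i ∈ T_v}|`. -/
def IsPrimeTreePF {n : ℕ} (root : Fin n) (parent : Fin n → Fin n)
    (s : Fin n → Fin n) : Prop :=
  IsTreePF parent s ∧ ∀ v, v ≠ root →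
    (subtree parent v).card < (Finset.univ.filter fun i => s i ∈ subtree parent v).card

/-- The edge `(u, parent u)` (for non-root `u`) is *used* by `s`: some driver `i`,
after failing to park at her preferred spot `s i`, crosses it, i.e. every vertex on
the path from `s i` up to and including `u` is occupied when she drives. -/
def UsedEdge {n : ℕ} (root : Fin n) (parent : Fin n → Fin n) (s : Fin n → Fin n)
    (u : Fin n) : Prop :=
  u ≠ root ∧ ∃ i : Fin n, ∃ k, parent^[k] (s i) = u ∧
    ∀ j ≤ k, parent^[j] (s i) ∈ occAfter parent s i

/-! Let `w` be the vertex where the last driver parks. Every earlier driver preferring a vertex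
of `T_w` finds `w` still free on her way, so she parks in `T_w \ {w}`, and distinct drivers park
at distinct vertices. Hence at most `|T_w|` drivers prefer `T_w`, which primeness forbids unless
`w` is the root. -/

section Parking

variable {n : ℕ} {parent : Fin n → Fin n}

theorem parkSpot_not_mem {occ : Finset (Fin n)} {v u : Fin n}
    (h : parkSpot parent occ v = some u) : u ∉ occ := by
  simpa using List.find?_some h

theorem exists_iterate_eq_of_parkSpot_eq_some {occ : Finset (Fin n)} {v u : Fin n}
    (h : parkSpot parent occ v = some u) {k : ℕ} (hfree : parent^[k] v ∉ occ) :
    ∃ j ≤ k, parent^[j] v = u := by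
  obtain ⟨-, i, hi, rfl, hbefore⟩ := List.find?_eq_some_iff_getElem.1 h
  refine ⟨i, ?_, by simp [pathToRoot]⟩
  by_contra! hki
  simpa [pathToRoot, hfree] using hbefore k hki

theorem mem_subtree {u v : Fin n} : u ∈ subtree parent v ↔ ∃ k < n, parent^[k] u = v := by
  simp [subtree]

theorem parkSpot_mem_subtree {occ : Finset (Fin n)} {v u w : Fin n}
    (h : parkSpot parent occ v = some u) (hv : v ∈ subtree parent w) (hw : w ∉ occ) :
    u ∈ subtree parent w := by
  obtain ⟨k, hk, rfl⟩ := mem_subtree.1 hv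
  obtain ⟨j, hjk, rfl⟩ := exists_iterate_eq_of_parkSpot_eq_some h hw
  refine mem_subtree.2 ⟨k - j, by omega, ?_⟩
  rw [← Function.iterate_add_apply, Nat.sub_add_cancel hjk]

end Parking

section OccAfter

variable {n : ℕ} (parent s : Fin n → Fin n)

theorem occAfter_succ {m : ℕ} (hm : m < n) :
    occAfter parent s (m + 1) = treeStep parent (occAfter parent s m) (s ⟨m, hm⟩) := by
  have hget : (List.ofFn s)[m]? = some (s ⟨m, hm⟩) := by simp [hm]
  rw [occAfter, List.take_add_one, hget]
  rw [List.foldl_append]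
  rfl

theorem occAfter_of_le {m : ℕ} (hm : n ≤ m) : occAfter parent s m = occAfter parent s n := by
  simp only [occAfter]
  rw [List.take_of_length_le (by simpa using hm), List.take_of_length_le (by simp)]

theorem occAfter_succ_eq_insert {i : Fin n} {u : Fin n}
    (h : parkSpot parent (occAfter parent s i) (s i) = some u) :
    occAfter parent s (i + 1) = insert u (occAfter parent s i) := by
  rw [occAfter_succ parent s i.isLt, treeStep, h]

theorem occAfter_succ_of_parkSpot_eq_none {i : Fin n}
    (h : parkSpot parent (occAfter parent s i) (s i) = none) :
    occAfter parent s (i + 1) = occAfter parent s i := by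
  rw [occAfter_succ parent s i.isLt, treeStep, h]

theorem occAfter_mono : Monotone (occAfter parent s) := by
  refine monotone_nat_of_le_succ fun m => ?_
  rcases lt_or_ge m n with hm | hm
  · rw [occAfter_succ parent s hm, treeStep]
    split
    · exact Finset.subset_insert _ _
    · exact le_rfl
  · rw [occAfter_of_le parent s hm, occAfter_of_le parent s (m := m + 1) (by omega)]

theorem card_occAfter_succ_le (m : ℕ) :
    (occAfter parent s (m + 1)).card ≤ (occAfter parent s m).card + 1 := by
  rcases lt_or_ge m n with hm | hm
  · rw [occAfter_succ parent s hm, treeStep]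
    split
    · exact Finset.card_insert_le _ _
    · omega
  · rw [occAfter_of_le parent s hm, occAfter_of_le parent s (m := m + 1) (by omega)]
    omega

theorem card_occAfter_le_add {m m' : ℕ} (h : m ≤ m') :
    (occAfter parent s m').card ≤ (occAfter parent s m).card + (m' - m) := by
  induction m', h using Nat.le_induction with
  | base => simp
  | succ m' hm ih =>
    have := card_occAfter_succ_le parent s m'
    omega

variable {parent s}

/-- Each driver fills at most one vertex, and all `n` are filled in the end. -/
theorem IsTreePF.card_occAfter (hs : IsTreePF parent s) {m : ℕ} (hm : m ≤ n) :
    (occAfter parent s m).card = m := by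
  have hle := card_occAfter_le_add parent s (Nat.zero_le m)
  have hge := card_occAfter_le_add parent s hm
  rw [show occAfter parent s n = Finset.univ from hs, Finset.card_univ, Fintype.card_fin] at hge
  rw [show occAfter parent s 0 = ∅ from rfl, Finset.card_empty] at hle
  omega

theorem IsTreePF.exists_parkSpot_eq_some (hs : IsTreePF parent s) (i : Fin n) :
    ∃ u, parkSpot parent (occAfter parent s i) (s i) = some u := by
  rcases h : parkSpot parent (occAfter parent s i) (s i) with _ | u
  · have hcard := congrArg Finset.card (occAfter_succ_of_parkSpot_eq_none parent s h)
    rw [hs.card_occAfter i.isLt, hs.card_occAfter i.isLt.le] at hcard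
    omega
  · exact ⟨u, rfl⟩

variable {g : Fin n → Fin n}
  (hg : ∀ i : Fin n, parkSpot parent (occAfter parent s i) (s i) = some (g i))
include hg

theorem mem_occAfter_of_lt {i : Fin n} {m : ℕ} (hi : i.val < m) : g i ∈ occAfter parent s m :=
  occAfter_mono parent s hi (by rw [occAfter_succ_eq_insert parent s (hg i)]; simp)

theorem injective_of_parkSpot_eq_some : Function.Injective g := by
  have hne_of_lt : ∀ i j : Fin n, i < j → g i ≠ g j := fun i j hij he =>
    parkSpot_not_mem (hg j) (he ▸ mem_occAfter_of_lt hg hij)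
  intro i j he
  by_contra hij
  rcases lt_or_gt_of_ne hij with h | h
  · exact hne_of_lt i j h he
  · exact hne_of_lt j i h he.symm

/-- While `w` is free, every driver preferring `T_w` parks in `T_w \ {w}`, at distinct spots. -/
theorem card_filter_lt_card_subtree {w : Fin n} {m : ℕ} (hw : w ∉ occAfter parent s m) :
    (Finset.univ.filter fun i : Fin n => i.val < m ∧ s i ∈ subtree parent w).card
      < (subtree parent w).card := by
  have hmaps : ∀ i ∈ Finset.univ.filter fun i : Fin n => i.val < m ∧ s i ∈ subtree parent w,
      g i ∈ (subtree parent w).erase w := by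
    intro i hi
    obtain ⟨hm, hsi⟩ := (Finset.mem_filter.1 hi).2
    have hwi : w ∉ occAfter parent s i := fun h => hw (occAfter_mono parent s hm.le h)
    refine Finset.mem_erase.2 ⟨fun he => hw ?_, parkSpot_mem_subtree (hg i) hsi hwi⟩
    exact he ▸ mem_occAfter_of_lt hg hm
  calc _ ≤ ((subtree parent w).erase w).card :=
        Finset.card_le_card_of_injOn g hmaps (injective_of_parkSpot_eq_some hg).injOn
    _ < (subtree parent w).card :=
        Finset.card_erase_lt_of_mem (mem_subtree.2 ⟨0, w.pos, rfl⟩)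

end OccAfter

theorem final_driver_parks_at_root_general {n : ℕ} (root : Fin (n + 1))
    (parent : Fin (n + 1) → Fin (n + 1))
    (p : Fin (n + 1) → Fin (n + 1)) (hp : IsPrimeTreePF root parent p) :
    parkSpot parent (occAfter parent p n) (p (Fin.last n)) = some root := by
  obtain ⟨hPF, hprime⟩ := hp
  choose g hg using hPF.exists_parkSpot_eq_some
  have hlast : parkSpot parent (occAfter parent p n) (p (Fin.last n)) = some (g (Fin.last n)) :=
    hg (Fin.last n)
  rw [hlast, Option.some_inj]
  by_contra hw
  have hearly := card_filter_lt_card_subtree hg (parkSpot_not_mem hlast)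
  have hprime_w := hprime _ hw
  set S := subtree parent (g (Fin.last n))
  have hsplit : (Finset.univ.filter fun i => p i ∈ S)
      ⊆ insert (Fin.last n) (Finset.univ.filter fun i : Fin (n + 1) => i.val < n ∧ p i ∈ S) := by
    intro i hi
    by_cases hi_last : i = Fin.last n
    · exact hi_last ▸ Finset.mem_insert_self _ _
    · exact Finset.mem_insert_of_mem (by simpa [Fin.val_lt_last hi_last] using hi)
  have := (Finset.card_le_card hsplit).trans (Finset.card_insert_le _ _)
  omega

/-- If `(T, p)` is a prime parking function on a rooted tree with
`n + 1 ≥ 1` vertices, then the final driver parks at the root. -/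
theorem final_driver_parks_at_root {n : ℕ} (root : Fin (n + 1))
    (parent : Fin (n + 1) → Fin (n + 1)) (hT : IsRootedTree root parent)
    (p : Fin (n + 1) → Fin (n + 1)) (hp : IsPrimeTreePF root parent p) :
    parkSpot parent (occAfter parent p n) (p (Fin.last n)) = some root :=
  final_driver_parks_at_root_general root parent p hp
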